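/- Suppose potential outcomes Y0(0), Y1(0) ∈ {0,1}, everyone is untreated at t=0 (D0 = 0 a.s.), period-1 treatment is perfect selection on the realized past outcome, D1 = 1 − Y0(0), and P(Y0(0) = 0) ∈ (0,1). Then the parallel trends condition E[Y1(0) − Y0(0) | D1 = 1] = E[Y1(0) − Y0(0) | D1 = 0] holds if and only if Y0(0) = Y1(0) almost surely. -/

import Mathlib

/-
On `{D1 = 1} = {Y0 = 0}` the trend `Y1 - Y0 = Y1` is nonnegative, and on `{D1 = 0} = {Y0 = 1}`
it is `Y1 - 1 ≤ 0`. Hence the conditional mean trend is `≥ 0` in the treated group and `≤ 0` in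
the control group, so the two agree only if both vanish, which for a sign-definite variable
forces it to vanish almost surely on the conditioning event. As the two groups cover `Ω`, the
trend vanishes almost surely.
-/

open MeasureTheory ProbabilityTheory

/-- Conditional expectation of a real random variable `Y` given the event `A`. -/
noncomputable def cexp {Ω : Type*} [MeasurableSpace Ω] (μ : Measure Ω) (A : Set Ω)
    (Y : Ω → ℝ) : ℝ := ∫ ω, Y ω ∂(μ[|A])

section ConditionalMean

variable {Ω : Type*} [MeasurableSpace Ω] {μ : Measure Ω} {A B : Set Ω} {Y : Ω → ℝ}

lemma cexp_nonneg (hA : MeasurableSet A) (hY : ∀ ω ∈ A, 0 ≤ Y ω) : 0 ≤ cexp μ A Y :=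
  integral_nonneg_of_ae (ae_cond_of_forall_mem hA hY)

lemma cexp_nonpos (hA : MeasurableSet A) (hY : ∀ ω ∈ A, Y ω ≤ 0) : cexp μ A Y ≤ 0 :=
  integral_nonpos_of_ae (ae_cond_of_forall_mem hA hY)

lemma cexp_neg : cexp μ A (fun ω => -Y ω) = -cexp μ A Y :=
  integral_neg Y

variable [IsFiniteMeasure μ]

lemma cexp_eq_zero_iff_of_nonneg (hA : MeasurableSet A) (hμA : μ A ≠ 0) (hYi : Integrable Y μ)
    (hY : ∀ ω ∈ A, 0 ≤ Y ω) : cexp μ A Y = 0 ↔ ∀ᵐ ω ∂μ, ω ∈ A → Y ω = 0 := by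
  rw [cexp, integral_eq_zero_iff_of_nonneg_ae (ae_cond_of_forall_mem hA hY)
      (hYi.restrict.smul_measure (ENNReal.inv_ne_top.2 hμA)),
    Filter.EventuallyEq, ProbabilityTheory.cond,
    Measure.ae_ennreal_smul_measure_iff (ENNReal.inv_ne_zero.2 (measure_ne_top μ A)),
    ae_restrict_iff' hA]
  rfl

lemma cexp_eq_zero_iff_of_nonpos (hA : MeasurableSet A) (hμA : μ A ≠ 0) (hYi : Integrable Y μ)
    (hY : ∀ ω ∈ A, Y ω ≤ 0) : cexp μ A Y = 0 ↔ ∀ᵐ ω ∂μ, ω ∈ A → Y ω = 0 := by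
  have h := cexp_eq_zero_iff_of_nonneg (Y := fun ω => -Y ω) hA hμA hYi.neg
    fun ω hω => neg_nonneg.2 (hY ω hω)
  simpa only [cexp_neg, neg_eq_zero] using h

lemma cexp_eq_cexp_iff_of_nonneg_of_nonpos (hA : MeasurableSet A) (hB : MeasurableSet B)
    (hμA : μ A ≠ 0) (hμB : μ B ≠ 0) (hYi : Integrable Y μ)
    (hYA : ∀ ω ∈ A, 0 ≤ Y ω) (hYB : ∀ ω ∈ B, Y ω ≤ 0) :
    cexp μ A Y = cexp μ B Y ↔
      (∀ᵐ ω ∂μ, ω ∈ A → Y ω = 0) ∧ ∀ᵐ ω ∂μ, ω ∈ B → Y ω = 0 := by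
  rw [← cexp_eq_zero_iff_of_nonneg hA hμA hYi hYA, ← cexp_eq_zero_iff_of_nonpos hB hμB hYi hYB]
  have := cexp_nonneg (μ := μ) hA hYA
  have := cexp_nonpos (μ := μ) hB hYB
  constructor
  · intro h
    constructor <;> linarith
  · rintro ⟨hA0, hB0⟩
    rw [hA0, hB0]

end ConditionalMean

theorem stmt_2_general {Ω : Type*} [MeasurableSpace Ω] (μ : Measure Ω) [IsProbabilityMeasure μ]
    (Y0 Y1 : Ω → ℝ) (D1 : Ω → ℝ)
    (hY0bin : ∀ ω, Y0 ω = 0 ∨ Y0 ω = 1) (hY1bin : ∀ ω, Y1 ω = 0 ∨ Y1 ω = 1)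
    (hY0m : Measurable Y0) (hY1m : Measurable Y1)
    (hD1 : ∀ ω, D1 ω = 1 - Y0 ω)
    (hpos0 : 0 < μ {ω | D1 ω = 0}) (hpos1 : 0 < μ {ω | D1 ω = 1}) :
    (cexp μ {ω | D1 ω = 1} (fun ω => Y1 ω - Y0 ω)
      = cexp μ {ω | D1 ω = 0} (fun ω => Y1 ω - Y0 ω))
    ↔ (∀ᵐ ω ∂μ, Y0 ω = Y1 ω) := by
  have hD1m : Measurable D1 := by
    rw [show D1 = fun ω => 1 - Y0 ω from funext hD1]
    exact measurable_const.sub hY0m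
  have hgroup : ∀ d, MeasurableSet {ω | D1 ω = d} := fun d => hD1m (measurableSet_singleton d)
  have htrend : Integrable (fun ω => Y1 ω - Y0 ω) μ :=
    .of_bound (hY1m.sub hY0m).aestronglyMeasurable 1 <| .of_forall fun ω => by
      rcases hY0bin ω with h0 | h0 <;> rcases hY1bin ω with h1 | h1 <;> norm_num [h0, h1]
  have hY1nonneg : ∀ ω, 0 ≤ Y1 ω := fun ω => by rcases hY1bin ω with h | h <;> simp [h]
  have hY1le : ∀ ω, Y1 ω ≤ 1 := fun ω => by rcases hY1bin ω with h | h <;> simp [h]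
  have htreated : ∀ ω ∈ {ω | D1 ω = 1}, 0 ≤ Y1 ω - Y0 ω := fun ω (hω : D1 ω = 1) => by
    linarith [hD1 ω, hY1nonneg ω]
  have hcontrol : ∀ ω ∈ {ω | D1 ω = 0}, Y1 ω - Y0 ω ≤ 0 := fun ω (hω : D1 ω = 0) => by
    linarith [hD1 ω, hY1le ω]
  rw [cexp_eq_cexp_iff_of_nonneg_of_nonpos (hgroup 1) (hgroup 0)
    hpos1.ne' hpos0.ne' htrend htreated hcontrol,
    ← Filter.eventually_and]
  refine Filter.eventually_congr (.of_forall fun ω => ?_)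
  rcases hY0bin ω with h0 | h0 <;> simp [hD1, h0, sub_eq_zero, eq_comm (a := Y1 ω)]

/-- Selection on past outcomes: with binary outcomes, `D0 = 0`, and perfect selection
`D1 = 1 - Y0(0)`, parallel trends holds iff the untreated potential outcome does not
vary over time almost surely. -/
theorem stmt_2 {Ω : Type*} [MeasurableSpace Ω] (μ : Measure Ω) [IsProbabilityMeasure μ]
    (Y0 Y1 : Ω → ℝ) (D0 D1 : Ω → ℝ)
    (hY0bin : ∀ ω, Y0 ω = 0 ∨ Y0 ω = 1) (hY1bin : ∀ ω, Y1 ω = 0 ∨ Y1 ω = 1)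
    (hY0m : Measurable Y0) (hY1m : Measurable Y1)
    (hD0 : ∀ ω, D0 ω = 0) (hD1 : ∀ ω, D1 ω = 1 - Y0 ω)
    (hpos0 : 0 < μ {ω | D1 ω = 0}) (hpos1 : 0 < μ {ω | D1 ω = 1}) :
    (cexp μ {ω | D1 ω = 1} (fun ω => Y1 ω - Y0 ω)
      = cexp μ {ω | D1 ω = 0} (fun ω => Y1 ω - Y0 ω))
    ↔ (∀ᵐ ω ∂μ, Y0 ω = Y1 ω) :=
  stmt_2_general μ Y0 Y1 D1 hY0bin hY1bin hY0m hY1m hD1 hpos0 hpos1
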